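/- arXiv:2411.03026 — 3 statements merged into one kernel-verified Lean document; each statement's English description precedes it below -/
import Mathlib

section
/- Let M̲ > 0 and let V be a linear subspace of ℝⁿ. If the intervention σ lies in V, then the 'remainder' parts of the expenditure and total-surplus decompositions over eigenvalues smaller than M̲ in absolute value satisfy |Σ_{ℓ: |λ_ℓ| < M̲} (u^ℓ·q⁰)(u^ℓ·σ)| ≤ ‖P⊥_{L(D,M̲)} P_V‖·‖σ‖·‖q⁰‖ and |Σ_{ℓ: |λ_ℓ| < M̲} (|λ_ℓ|/(1+|λ_ℓ|))·(u^ℓ·q⁰)(u^ℓ·σ)| ≤ ‖P⊥_{L(D,M̲)} P_V‖·‖σ‖·‖q⁰‖. -/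
noncomputable section
open Matrix MeasureTheory Filter

/-- Vectors in `ℝⁿ` with the Euclidean norm/inner product. -/
abbrev Vec (n : ℕ) := EuclideanSpace ℝ (Fin n)

variable {n : ℕ}

/-- Price effect `ṗ = −(I − D)⁻¹ σ`. -/
def pDot (D : Matrix (Fin n) (Fin n) ℝ) (σ : Vec n) : Vec n :=
  -(Matrix.toEuclideanLin (1 - D)⁻¹ σ)

/-- Quantity effect `q̇ = D ṗ`. -/
def qDot (D : Matrix (Fin n) (Fin n) ℝ) (σ : Vec n) : Vec n :=
  Matrix.toEuclideanLin D (pDot D σ)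

/-- Expenditure derivative `Ṡ = σ·q⁰`. -/
def SDot (q σ : Vec n) : ℝ := inner ℝ σ q

/-- Consumer surplus derivative `Ċ = −q⁰·ṗ`. -/
def CDot (D : Matrix (Fin n) (Fin n) ℝ) (q σ : Vec n) : ℝ := -(inner ℝ q (pDot D σ) : ℝ)

/-- Producer surplus derivative `Ṗ = 2 q⁰·q̇`. -/
def PDot (D : Matrix (Fin n) (Fin n) ℝ) (q σ : Vec n) : ℝ := 2 * (inner ℝ q (qDot D σ) : ℝ)

/-- Total surplus derivative `Ẇ = Ċ + Ṗ − Ṡ`. -/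
def WDot (D : Matrix (Fin n) (Fin n) ℝ) (q σ : Vec n) : ℝ :=
  CDot D q σ + PDot D q σ - SDot q σ

/-- A normalized Slutsky matrix: symmetric, negative semidefinite, diagonal entries `−1`. -/
def IsSlutsky (D : Matrix (Fin n) (Fin n) ℝ) : Prop :=
  D.IsSymm ∧ (-D).PosSemidef ∧ ∀ i, D i i = -1

/-- The span of the eigenvectors of a matrix whose eigenvalues are at least `M`
in absolute value. -/
def eigSpan (A : Matrix (Fin n) (Fin n) ℝ) (M : ℝ) : Submodule ℝ (Vec n) :=
  ⨆ μ ∈ {μ : ℝ | M ≤ |μ|}, Module.End.eigenspace (Matrix.toEuclideanLin A) μ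

/-- Orthogonal projection onto a subspace, as a map into the ambient space. -/
def projVec (V : Submodule ℝ (Vec n)) (x : Vec n) : Vec n :=
  (V.orthogonalProjectionOnto x : Vec n)

/-- Orthogonal projection onto a subspace, as a continuous linear endomorphism. -/
def projCLM (V : Submodule ℝ (Vec n)) : Vec n →L[ℝ] Vec n :=
  V.subtypeL.comp (V.orthogonalProjectionOnto)

/-- Spectral (operator) norm of a matrix. -/
def specNorm (A : Matrix (Fin n) (Fin n) ℝ) : ℝ :=
  ‖LinearMap.toContinuousLinearMap (Matrix.toEuclideanLin A)‖

/-! The eigenvectors `u ℓ` with `|λ_ℓ| < M` are orthogonal to every eigenspace of the symmetric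
map `D` with eigenvalue of absolute value `≥ M`, hence lie in `L(D, M)ᗮ`. For `σ ∈ V` the
operator `K = P⊥_L P_V` sends `σ` to its projection onto `Lᗮ`, which has the same inner products
with these `u ℓ`. So each remainder sum is `⟪y, K σ⟫` for `y = ∑ c_ℓ ⟪u ℓ, q⟫ u ℓ` with weights
`|c_ℓ| ≤ 1`, and Bessel's inequality gives `‖y‖ ≤ ‖q‖`. -/

open scoped InnerProductSpace

section InnerProductSpace

variable {E : Type*} [NormedAddCommGroup E] [InnerProductSpace ℝ E] {ι : Type*}

theorem Orthonormal.norm_sum_mul_inner_smul_le {u : ι → E} (hu : Orthonormal ℝ u) (s : Finset ι)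
    {c : ι → ℝ} (hc : ∀ i ∈ s, |c i| ≤ 1) (q : E) :
    ‖∑ i ∈ s, (c i * ⟪u i, q⟫_ℝ) • u i‖ ≤ ‖q‖ := by
  refine le_of_sq_le_sq ?_ (norm_nonneg q)
  calc ‖∑ i ∈ s, (c i * ⟪u i, q⟫_ℝ) • u i‖ ^ 2
      = ∑ i ∈ s, c i ^ 2 * ⟪u i, q⟫_ℝ ^ 2 := by
        rw [← real_inner_self_eq_norm_sq, hu.inner_sum]
        exact Finset.sum_congr rfl fun i _ => by simp only [conj_trivial]; ring
    _ ≤ ∑ i ∈ s, ‖⟪u i, q⟫_ℝ‖ ^ 2 := Finset.sum_le_sum fun i hi => by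
        rw [Real.norm_eq_abs, sq_abs]
        refine mul_le_of_le_one_left (sq_nonneg _) ?_
        simpa only [sq_abs] using pow_le_one₀ (abs_nonneg (c i)) (hc i hi) (n := 2)
    _ ≤ ‖q‖ ^ 2 := hu.sum_inner_products_le q

theorem Orthonormal.abs_sum_mul_inner_mul_inner_le {u : ι → E} (hu : Orthonormal ℝ u)
    (L V : Submodule ℝ E) [L.HasOrthogonalProjection] [V.HasOrthogonalProjection]
    {s : Finset ι} (hs : ∀ i ∈ s, u i ∈ Lᗮ) {c : ι → ℝ} (hc : ∀ i ∈ s, |c i| ≤ 1)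
    (q : E) {σ : E} (hσ : σ ∈ V) :
    |∑ i ∈ s, c i * (⟪u i, q⟫_ℝ * ⟪u i, σ⟫_ℝ)| ≤
      ‖(1 - L.starProjection).comp V.starProjection‖ * ‖σ‖ * ‖q‖ := by
  set K := (1 - L.starProjection).comp V.starProjection
  set y := ∑ i ∈ s, (c i * ⟪u i, q⟫_ℝ) • u i
  have hKσ : K σ = Lᗮ.starProjection σ := by
    simp [K, L.starProjection_orthogonal', Submodule.starProjection_eq_self_iff.2 hσ]
  have hpair : ⟪y, K σ⟫_ℝ = ∑ i ∈ s, c i * (⟪u i, q⟫_ℝ * ⟪u i, σ⟫_ℝ) := by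
    rw [sum_inner]
    refine Finset.sum_congr rfl fun i hi => ?_
    rw [real_inner_smul_left, hKσ, ← Submodule.inner_starProjection_left_eq_right,
      Submodule.starProjection_eq_self_iff.2 (hs i hi), mul_assoc]
  calc |∑ i ∈ s, c i * (⟪u i, q⟫_ℝ * ⟪u i, σ⟫_ℝ)|
      = |⟪y, K σ⟫_ℝ| := by rw [hpair]
    _ ≤ ‖y‖ * ‖K σ‖ := abs_real_inner_le_norm _ _
    _ ≤ ‖q‖ * (‖K‖ * ‖σ‖) := by
        gcongr
        exacts [hu.norm_sum_mul_inner_smul_le s hc q, K.le_opNorm σ]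
    _ = ‖K‖ * ‖σ‖ * ‖q‖ := by ring

theorem LinearMap.IsSymmetric.mem_orthogonal_iSup_eigenspace {T : E →ₗ[ℝ] E}
    (hT : T.IsSymmetric) {S : Set ℝ} {μ : ℝ} (hμ : μ ∉ S) {v : E} (hv : v ∈ Module.End.eigenspace T μ) :
    v ∈ (⨆ ν ∈ S, Module.End.eigenspace T ν)ᗮ := by
  have hortho : (⨆ ν ∈ S, Module.End.eigenspace T ν) ⟂ Module.End.eigenspace T μ :=
    Submodule.isOrtho_iSup_left.2 fun ν => Submodule.isOrtho_iSup_left.2 fun hν =>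
      hT.orthogonalFamily_eigenspaces.isOrtho (ne_of_mem_of_not_mem hν hμ)
  exact Submodule.isOrtho_comm.1 hortho |>.le hv

end InnerProductSpace

theorem projCLM_eq_starProjection (V : Submodule ℝ (Vec n)) : projCLM V = V.starProjection := rfl

theorem stmt11_general (n : ℕ) (D : Matrix (Fin n) (Fin n) ℝ) (hD : IsSlutsky D)
    (u : Fin n → Vec n) (lam : Fin n → ℝ)
    (hu : Orthonormal ℝ u)
    (heig : ∀ ℓ, Matrix.toEuclideanLin D (u ℓ) = lam ℓ • u ℓ)
    (q : Vec n) (Mlow : ℝ)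
    (V : Submodule ℝ (Vec n)) (σ : Vec n) (hσ : σ ∈ V) :
    |∑ ℓ ∈ Finset.univ.filter (fun ℓ => |lam ℓ| < Mlow),
        (inner ℝ (u ℓ) q : ℝ) * (inner ℝ (u ℓ) σ : ℝ)| ≤
      ‖((1 : Vec n →L[ℝ] Vec n) - projCLM (eigSpan D Mlow)).comp (projCLM V)‖ * ‖σ‖ * ‖q‖ ∧
    |∑ ℓ ∈ Finset.univ.filter (fun ℓ => |lam ℓ| < Mlow),
        (|lam ℓ| / (1 + |lam ℓ|)) * ((inner ℝ (u ℓ) q : ℝ) * (inner ℝ (u ℓ) σ : ℝ))| ≤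
      ‖((1 : Vec n →L[ℝ] Vec n) - projCLM (eigSpan D Mlow)).comp (projCLM V)‖ * ‖σ‖ * ‖q‖ := by
  have hsym : (Matrix.toEuclideanLin D).IsSymmetric :=
    Matrix.isSymmetric_toEuclideanLin_iff.2 (by simpa [Matrix.IsHermitian] using hD.1.eq)
  have hperp : ∀ ℓ ∈ Finset.univ.filter (fun ℓ => |lam ℓ| < Mlow), u ℓ ∈ (eigSpan D Mlow)ᗮ :=
    fun ℓ hℓ => hsym.mem_orthogonal_iSup_eigenspace (S := {μ | Mlow ≤ |μ|})
      (not_le.2 (Finset.mem_filter.1 hℓ).2) (Module.End.mem_eigenspace_iff.2 (heig ℓ))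
  simp only [projCLM_eq_starProjection]
  constructor
  · simpa only [one_mul] using hu.abs_sum_mul_inner_mul_inner_le _ V hperp (c := fun _ => 1)
      (fun _ _ => by simp) q hσ
  · refine hu.abs_sum_mul_inner_mul_inner_le _ V hperp (fun ℓ _ => ?_) q hσ
    rw [abs_of_nonneg (by positivity), div_le_one (by positivity)]
    exact le_add_of_nonneg_left zero_le_one

/-- bounds on the remainder parts (over eigenvalues of absolute value
smaller than M) of the expenditure and total-surplus spectral decompositions, for an
intervention lying in a subspace V. -/
theorem stmt11 (n : ℕ) (hn : 1 ≤ n) (D : Matrix (Fin n) (Fin n) ℝ) (hD : IsSlutsky D)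
    (u : Fin n → Vec n) (lam : Fin n → ℝ)
    (hu : Orthonormal ℝ u)
    (hspan : Submodule.span ℝ (Set.range u) = ⊤)
    (heig : ∀ ℓ, Matrix.toEuclideanLin D (u ℓ) = lam ℓ • u ℓ)
    (hneg : ∀ ℓ, lam ℓ ≤ 0)
    (q : Vec n) (Mlow : ℝ) (hM : 0 < Mlow)
    (V : Submodule ℝ (Vec n)) (σ : Vec n) (hσ : σ ∈ V) :
    |∑ ℓ ∈ Finset.univ.filter (fun ℓ => |lam ℓ| < Mlow),
        (inner ℝ (u ℓ) q : ℝ) * (inner ℝ (u ℓ) σ : ℝ)| ≤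
      ‖((1 : Vec n →L[ℝ] Vec n) - projCLM (eigSpan D Mlow)).comp (projCLM V)‖ * ‖σ‖ * ‖q‖ ∧
    |∑ ℓ ∈ Finset.univ.filter (fun ℓ => |lam ℓ| < Mlow),
        (|lam ℓ| / (1 + |lam ℓ|)) * ((inner ℝ (u ℓ) q : ℝ) * (inner ℝ (u ℓ) σ : ℝ))| ≤
      ‖((1 : Vec n →L[ℝ] Vec n) - projCLM (eigSpan D Mlow)).comp (projCLM V)‖ * ‖σ‖ * ‖q‖ :=
  stmt11_general n D hD u lam hu heig q Mlow V σ hσ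
end
end

section
/- Let n ≥ 2 and D* = −(n/(n−1))·I + (1/(n−1))·𝟙𝟙ᵀ, where 𝟙 is the all-ones vector. Then: (a) D* is a normalized Slutsky matrix (symmetric, negative semidefinite, all diagonal entries −1), with eigenvalue 0 on span(𝟙) and eigenvalue −n/(n−1) on the orthogonal complement of 𝟙; and (b) for every intervention σ ∈ ℝⁿ there exists a unit vector r orthogonal to 𝟙 such that the market state (D*, q⁰) with q⁰ = (1/n)·(𝟙 + (1/2)·r) satisfies ‖q⁰‖ ≤ 1 and has total surplus derivative Ẇ ≤ 0. -/
noncomputable section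
open Matrix MeasureTheory Filter

variable {n : ℕ}

/-- The all-ones vector. -/
def onesV (n : ℕ) : Vec n := WithLp.toLp 2 (fun _ => (1 : ℝ))

/-!
Whenever `I - D` is invertible, `(I - D) ṗ = -σ` collapses the surplus accounting to
`Ẇ = q⁰ · q̇`. For symmetric `D` with `D q⁰ = μ r` and `D r = c r` this becomes
`Ẇ = -μ / (1 - c) · (r · σ)`. For `D*`, which kills `𝟙` and acts by `c = -n/(n-1)` on `𝟙ᗮ`,
the state `q⁰ = (𝟙 + r/2)/n` has `μ = c/(2n) ≤ 0`, so `Ẇ` has the sign of `r · σ`, and it only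
remains to pick the unit vector `r ⊥ 𝟙` on the non-positive side of `σ`. Negative
semidefiniteness of `D*` is Cauchy–Schwarz: `(𝟙 · x)² ≤ n ‖x‖²`.
-/

open scoped RealInnerProductSpace

lemma norm_onesV_sq : ‖onesV n‖ ^ 2 = n := by
  simp [onesV, EuclideanSpace.norm_eq]

section ScalarPlusOnes

variable (a b : ℝ)

lemma isSymm_smul_one_add_smul_ones :
    (a • (1 : Matrix (Fin n) (Fin n) ℝ) + b • of fun _ _ => (1 : ℝ)).IsSymm :=
  IsSymm.ext fun i j => by simp [one_apply, eq_comm]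

lemma toEuclideanLin_smul_one_add_smul_ones (v : Vec n) :
    toEuclideanLin (a • (1 : Matrix (Fin n) (Fin n) ℝ) + b • of fun _ _ => (1 : ℝ)) v =
      a • v + (b * ⟪onesV n, v⟫) • onesV n := by
  ext i
  simp [toLpLin_apply, mulVec, dotProduct, onesV, PiLp.inner_apply, Finset.mul_sum]

variable {a b}

lemma posSemidef_neg_smul_one_add_smul_ones (hb : 0 ≤ b) (hab : a + n * b ≤ 0) :
    (-(a • (1 : Matrix (Fin n) (Fin n) ℝ) + b • of fun _ _ => (1 : ℝ))).PosSemidef := by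
  rw [← isPositive_toEuclideanLin_iff]
  refine ⟨isSymmetric_toEuclideanLin_iff.2
    (isHermitian_iff_isSymm.2 (isSymm_smul_one_add_smul_ones a b).neg), fun x => ?_⟩
  have hCS : ⟪onesV n, x⟫ ^ 2 ≤ n * ‖x‖ ^ 2 := by
    simpa [sq, ← norm_onesV_sq, real_inner_self_eq_norm_sq] using
      real_inner_mul_inner_self_le (onesV n) x
  simp only [map_neg, LinearMap.neg_apply, toEuclideanLin_smul_one_add_smul_ones,
    RCLike.re_to_real, inner_neg_left, inner_add_left, real_inner_smul_left,
    real_inner_self_eq_norm_sq]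
  nlinarith [sq_nonneg ‖x‖]

end ScalarPlusOnes

def uniformSlutsky (n : ℕ) : Matrix (Fin n) (Fin n) ℝ :=
  (-((n : ℝ) / ((n : ℝ) - 1))) • (1 : Matrix (Fin n) (Fin n) ℝ) +
    (((n : ℝ) - 1)⁻¹) • Matrix.of (fun _ _ => (1 : ℝ))

lemma isSlutsky_uniformSlutsky (hn : 1 < n) : IsSlutsky (uniformSlutsky n) := by
  have hn1 : (0 : ℝ) < n - 1 := by rw [sub_pos]; exact_mod_cast hn
  refine ⟨isSymm_smul_one_add_smul_ones _ _, posSemidef_neg_smul_one_add_smul_ones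
    (inv_nonneg.2 hn1.le) (by rw [div_eq_mul_inv, neg_add_cancel]), fun i => ?_⟩
  simp only [uniformSlutsky, Matrix.add_apply, Matrix.smul_apply, one_apply_eq, of_apply,
    smul_eq_mul, mul_one]
  field_simp
  ring

lemma uniformSlutsky_apply_onesV (hn : 1 < n) :
    toEuclideanLin (uniformSlutsky n) (onesV n) = 0 := by
  have hn1 : (n : ℝ) - 1 ≠ 0 := by rw [sub_ne_zero]; exact_mod_cast hn.ne'
  rw [uniformSlutsky, toEuclideanLin_smul_one_add_smul_ones, real_inner_self_eq_norm_sq,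
    norm_onesV_sq, ← add_smul]
  field_simp
  simp

lemma uniformSlutsky_apply_of_inner_onesV_eq_zero {v : Vec n} (hv : ⟪onesV n, v⟫ = 0) :
    toEuclideanLin (uniformSlutsky n) v = (-((n : ℝ) / ((n : ℝ) - 1))) • v := by
  rw [uniformSlutsky, toEuclideanLin_smul_one_add_smul_ones, hv, mul_zero, zero_smul, add_zero]

section SurplusDerivatives

variable {D : Matrix (Fin n) (Fin n) ℝ}

lemma IsSlutsky.isUnit_one_sub (hD : IsSlutsky D) : IsUnit (1 - D) := by
  rw [sub_eq_add_neg]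
  exact (PosDef.one.add_posSemidef hD.2.1).isUnit

lemma pDot_sub_qDot (hD : IsUnit (1 - D)) (σ : Vec n) : pDot D σ - qDot D σ = -σ := by
  have h := mul_nonsing_inv _ ((isUnit_iff_isUnit_det _).1 hD)
  have hσ : toEuclideanLin (1 - D) (toEuclideanLin (1 - D)⁻¹ σ) = σ := by
    rw [← LinearMap.comp_apply, ← toLpLin_mul_same, h, toLpLin_one, LinearMap.id_apply]
  calc pDot D σ - qDot D σ = -toEuclideanLin (1 - D) (toEuclideanLin (1 - D)⁻¹ σ) := by
        simp only [qDot, pDot, map_neg, map_sub, toLpLin_one, LinearMap.sub_apply,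
          LinearMap.id_apply]
        abel
    _ = -σ := by rw [hσ]

lemma WDot_eq_inner_qDot (hD : IsUnit (1 - D)) (q σ : Vec n) : WDot D q σ = ⟪q, qDot D σ⟫ := by
  have hS : ⟪σ, q⟫ = ⟪q, qDot D σ⟫ - ⟪q, pDot D σ⟫ := by
    rw [← inner_sub_right, ← neg_sub, pDot_sub_qDot hD, neg_neg, real_inner_comm]
  rw [WDot, CDot, PDot, SDot, hS]
  ring

lemma WDot_eq_of_apply_eq_smul (hsymm : D.IsSymm) (hD : IsUnit (1 - D)) {q r : Vec n} {μ c : ℝ}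
    (hq : toEuclideanLin D q = μ • r) (hr : toEuclideanLin D r = c • r) (hc : c ≠ 1)
    (σ : Vec n) : WDot D q σ = -(μ / (1 - c)) * ⟪r, σ⟫ := by
  have hT := isSymmetric_toEuclideanLin_iff.2 (isHermitian_iff_isSymm.2 hsymm)
  have hrp : (1 - c) * ⟪r, pDot D σ⟫ = -⟪r, σ⟫ := by
    calc (1 - c) * ⟪r, pDot D σ⟫ = ⟪r - toEuclideanLin D r, pDot D σ⟫ := by
          rw [hr, inner_sub_left, real_inner_smul_left]
          ring
      _ = ⟪r, pDot D σ - qDot D σ⟫ := by rw [inner_sub_left, inner_sub_right, hT, qDot]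
      _ = -⟪r, σ⟫ := by rw [pDot_sub_qDot hD, inner_neg_right]
  have hc' : 1 - c ≠ 0 := sub_ne_zero.2 hc.symm
  rw [WDot_eq_inner_qDot hD, qDot, ← hT, hq, real_inner_smul_left]
  field_simp
  linear_combination μ * hrp

end SurplusDerivatives

lemma exists_mem_norm_eq_one_inner_nonpos {E : Type*} [NormedAddCommGroup E]
    [InnerProductSpace ℝ E] {K : Submodule ℝ E} (hK : K ≠ ⊥) (σ : E) :
    ∃ r ∈ K, ‖r‖ = 1 ∧ ⟪r, σ⟫ ≤ 0 := by
  obtain ⟨v, hvK, hv⟩ := Submodule.exists_mem_ne_zero_of_ne_bot hK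
  have hu : ‖‖v‖⁻¹ • v‖ = 1 := norm_smul_inv_norm hv
  rcases le_total ⟪‖v‖⁻¹ • v, σ⟫ 0 with h | h
  · exact ⟨_, K.smul_mem _ hvK, hu, h⟩
  · exact ⟨_, K.neg_mem (K.smul_mem _ hvK), by rwa [norm_neg],
      by rwa [inner_neg_left, neg_nonpos]⟩

lemma orthogonal_span_onesV_ne_bot (hn : 1 < n) : (ℝ ∙ onesV n)ᗮ ≠ ⊥ := by
  let i : Fin n := ⟨0, by omega⟩
  let j : Fin n := ⟨1, hn⟩
  have hij : i ≠ j := by simp [i, j, Fin.ext_iff]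
  rw [Submodule.ne_bot_iff]
  refine ⟨EuclideanSpace.single i 1 - EuclideanSpace.single j 1, ?_, fun h => ?_⟩
  · rw [Submodule.mem_orthogonal_singleton_iff_inner_right, inner_sub_right]
    simp [onesV, EuclideanSpace.inner_single_right]
  · simpa [hij] using congrArg (· i) h

lemma norm_inv_smul_onesV_add_le_one (hn : 2 ≤ n) {r : Vec n} (hr : ‖r‖ = 1)
    (hr1 : ⟪r, onesV n⟫ = 0) : ‖(n : ℝ)⁻¹ • (onesV n + (1 / 2 : ℝ) • r)‖ ≤ 1 := by
  have hn' : (2 : ℝ) ≤ n := by exact_mod_cast hn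
  have hpyth : ‖onesV n + (1 / 2 : ℝ) • r‖ ^ 2 = n + 1 / 4 := by
    rw [norm_add_sq_real, norm_onesV_sq, real_inner_smul_right, real_inner_comm, hr1, norm_smul,
      hr]
    norm_num
  rw [← sq_le_one_iff₀ (norm_nonneg _), norm_smul, mul_pow, hpyth, norm_inv, Real.norm_natCast,
    inv_pow, inv_mul_le_one₀ (by positivity)]
  nlinarith

/-- for D* = -(n/(n-1)) I + (1/(n-1)) 11^T: (a) D* is a normalized
Slutsky matrix with eigenvalue 0 on span(1) and eigenvalue -n/(n-1) on the orthogonal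
complement of 1; (b) for every intervention there is a unit vector r orthogonal to 1
such that the market state with q0 = (1/n)(1 + r/2) has Wdot ≤ 0. -/
theorem stmt14 (n : ℕ) (hn : 2 ≤ n)
    (Dstar : Matrix (Fin n) (Fin n) ℝ)
    (hDstar : Dstar = (-((n : ℝ) / ((n : ℝ) - 1))) • (1 : Matrix (Fin n) (Fin n) ℝ) +
      (((n : ℝ) - 1)⁻¹) • Matrix.of (fun _ _ => (1 : ℝ))) :
    (IsSlutsky Dstar ∧
      Matrix.toEuclideanLin Dstar (onesV n) = 0 ∧
      (∀ v : Vec n, (inner ℝ (onesV n) v : ℝ) = 0 →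
        Matrix.toEuclideanLin Dstar v = (-((n : ℝ) / ((n : ℝ) - 1))) • v)) ∧
    ∀ σ : Vec n, ∃ r : Vec n, ‖r‖ = 1 ∧ (inner ℝ r (onesV n) : ℝ) = 0 ∧
      ‖((n : ℝ)⁻¹ • (onesV n + (1 / 2 : ℝ) • r) : Vec n)‖ ≤ 1 ∧
      WDot Dstar ((n : ℝ)⁻¹ • (onesV n + (1 / 2 : ℝ) • r)) σ ≤ 0 := by
  change Dstar = uniformSlutsky n at hDstar
  subst hDstar
  have hn1 : 1 < n := hn
  have hD := isSlutsky_uniformSlutsky hn1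
  refine ⟨⟨hD, uniformSlutsky_apply_onesV hn1,
    fun v => uniformSlutsky_apply_of_inner_onesV_eq_zero⟩, fun σ => ?_⟩
  obtain ⟨r, hrK, hr, hrσ⟩ :=
    exists_mem_norm_eq_one_inner_nonpos (orthogonal_span_onesV_ne_bot hn1) σ
  have hr1 : ⟪onesV n, r⟫ = 0 := Submodule.mem_orthogonal_singleton_iff_inner_right.1 hrK
  have hr1' : ⟪r, onesV n⟫ = 0 := by rwa [real_inner_comm]
  refine ⟨r, hr, hr1', norm_inv_smul_onesV_add_le_one hn hr hr1', ?_⟩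
  set c : ℝ := -((n : ℝ) / ((n : ℝ) - 1))
  have hc : c ≤ 0 := by
    have : (0 : ℝ) ≤ n - 1 := by rw [sub_nonneg]; exact_mod_cast hn1.le
    exact neg_nonpos.2 (div_nonneg n.cast_nonneg this)
  have hq : toEuclideanLin (uniformSlutsky n) ((n : ℝ)⁻¹ • (onesV n + (1 / 2 : ℝ) • r)) =
      ((n : ℝ)⁻¹ * (1 / 2) * c) • r := by
    rw [map_smul, map_add, map_smul, uniformSlutsky_apply_onesV hn1,
      uniformSlutsky_apply_of_inner_onesV_eq_zero hr1, zero_add, smul_smul, smul_smul]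
  rw [WDot_eq_of_apply_eq_smul hD.1 hD.isUnit_one_sub hq
    (uniformSlutsky_apply_of_inner_onesV_eq_zero hr1) (by linarith)]
  refine mul_nonpos_of_nonneg_of_nonpos (neg_nonneg.2 (div_nonpos_of_nonpos_of_nonneg ?_ ?_)) hrσ
  · exact mul_nonpos_of_nonneg_of_nonpos (by positivity) (by linarith)
  · linarith
end
end

section
/- Let n ≥ 2, u¹ = n^{−1/2}·𝟙, D* = −(n/2)·u¹(u¹)ᵀ − (1/2)·I, let (u²,…,uⁿ) be an orthonormal basis of the orthogonal complement of u¹, let 0 < f ≤ (n−1)^{−1/2}, and let s₂,…,sₙ be independent random variables each uniform on {−1, +1}. Consider the random market state (D*, q⁰) with q⁰ = (1/2)·(u¹ + f·Σ_{ℓ=2}^n s_ℓ u^ℓ). Then for every fixed intervention σ ∈ ℝⁿ, the consumer surplus derivative satisfies Pr( Ċ > ‖σ‖/(n+3) ) ≤ 1/2; in particular, no fixed intervention achieves Ċ > ‖σ‖/(n+3) with probability greater than 1/2 over this family of market states. -/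
/-!
With the idempotent `P = u¹(u¹)ᵀ`, `I - D* = (n/2) P + (3/2) I`, whose inverse is
`(2/3) I - (2n / (3(n+3))) P`, so for `q⁰ = (u¹ + w)/2` with `w ⊥ u¹` one gets
`Ċ = ⟪u¹, σ⟫/(n+3) + ⟪w, σ⟫/3`. As `⟪u¹, σ⟫ ≤ ‖σ‖`, the event `Ċ > ‖σ‖/(n+3)` forces the
Rademacher sum `⟪w, σ⟫/3 = Σ_ℓ (f/3) ⟪u^ℓ, σ⟫ s_ℓ` above a threshold `t ≥ 0`. That sum `X` is
symmetric in law (flip all signs), so `{X > t}` and `{-X > t}` are disjoint events of equal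
probability, each at most `1/2`.
-/

noncomputable section
open Matrix MeasureTheory Filter

variable {n : ℕ}

namespace Matrix

variable {ι K : Type*} [Fintype ι] [DecidableEq ι] [Field K]

theorem inv_smul_add_smul_one_of_mul_self {P : Matrix ι ι K} (hP : P * P = P) {a b : K}
    (hb : b ≠ 0) (hab : a + b ≠ 0) :
    (a • P + b • 1)⁻¹ = b⁻¹ • 1 - (a / (b * (a + b))) • P := by
  refine inv_eq_right_inv ?_
  have key : (a • P + b • (1 : Matrix ι ι K)) * (b⁻¹ • 1 - (a / (b * (a + b))) • P)
      = (a * b⁻¹ - a / (b * (a + b)) * (a + b)) • P + (b * b⁻¹) • 1 := by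
    simp only [add_mul, mul_sub, smul_mul_assoc, mul_smul_comm, hP, mul_one, one_mul]
    module
  rw [key, mul_inv_cancel₀ hb]
  field_simp
  simp

end Matrix

theorem ofLp_dotProduct_ofLp (x y : Vec n) : x.ofLp ⬝ᵥ y.ofLp = inner ℝ x y := by
  simp [EuclideanSpace.inner_eq_star_dotProduct, dotProduct_comm]

theorem vecMulVec_mul_self_of_norm_eq_one {u : Vec n} (hu : ‖u‖ = 1) :
    vecMulVec u.ofLp u.ofLp * vecMulVec u.ofLp u.ofLp = vecMulVec u.ofLp u.ofLp := by
  rw [vecMulVec_mul_vecMulVec, ofLp_dotProduct_ofLp, real_inner_self_eq_norm_sq, hu, one_pow,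
    one_smul]

theorem toEuclideanLin_vecMulVec (u x : Vec n) :
    toEuclideanLin (vecMulVec u.ofLp u.ofLp) x = inner ℝ u x • u := by
  ext i
  simp [vecMulVec_mulVec, ofLp_dotProduct_ofLp, mul_comm]

theorem pDot_smul_vecMulVec_sub_half {u : Vec n} (hu : ‖u‖ = 1) (σ : Vec n) :
    pDot ((-((n : ℝ) / 2)) • vecMulVec u.ofLp u.ofLp - (1 / 2 : ℝ) • 1) σ
      = -((2 / 3 : ℝ) • σ - (2 * n / (3 * (n + 3)) * inner ℝ u σ) • u) := by
  have h1D : 1 - ((-((n : ℝ) / 2)) • vecMulVec u.ofLp u.ofLp - (1 / 2 : ℝ) • 1)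
      = ((n : ℝ) / 2) • vecMulVec u.ofLp u.ofLp + (3 / 2 : ℝ) • 1 := by
    module
  rw [pDot, h1D, inv_smul_add_smul_one_of_mul_self (vecMulVec_mul_self_of_norm_eq_one hu)
    (by norm_num) (by positivity)]
  have hcoef : (n : ℝ) / 2 / (3 / 2 * ((n : ℝ) / 2 + 3 / 2)) = 2 * n / (3 * (n + 3)) := by
    field_simp
  simp only [map_sub, map_smul, LinearMap.sub_apply, LinearMap.smul_apply,
    toEuclideanLin_vecMulVec, toLpLin_one, LinearMap.id_apply, smul_smul, hcoef]
  norm_num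

theorem CDot_smul_vecMulVec_sub_half {u : Vec n} (hu : ‖u‖ = 1) (q σ : Vec n) :
    CDot ((-((n : ℝ) / 2)) • vecMulVec u.ofLp u.ofLp - (1 / 2 : ℝ) • 1) q σ
      = 2 / 3 * inner ℝ q σ - 2 * n / (3 * (n + 3)) * inner ℝ u σ * inner ℝ q u := by
  rw [CDot, pDot_smul_vecMulVec_sub_half hu, inner_neg_right, neg_neg, inner_sub_right,
    real_inner_smul_right, real_inner_smul_right]

theorem CDot_half_smul_add_of_inner_eq_zero {u w : Vec n} (hu : ‖u‖ = 1)
    (huw : inner ℝ u w = 0) (σ : Vec n) :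
    CDot ((-((n : ℝ) / 2)) • vecMulVec u.ofLp u.ofLp - (1 / 2 : ℝ) • 1) ((1 / 2 : ℝ) • (u + w)) σ
      = inner ℝ u σ / (n + 3) + inner ℝ w σ / 3 := by
  have huu : inner ℝ u u = (1 : ℝ) := by rw [real_inner_self_eq_norm_sq, hu, one_pow]
  rw [CDot_smul_vecMulVec_sub_half hu, real_inner_smul_left, real_inner_smul_left,
    inner_add_left, inner_add_left, huu, real_inner_comm u w, huw]
  field_simp
  ring

open ProbabilityTheory

section SymmetricSigns

variable {Ω : Type*} [MeasurableSpace Ω] {μ : Measure Ω}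

theorem identDistrib_neg_of_eq_one_or_eq_neg_one {X : Ω → ℝ} (hX : Measurable X)
    (hsign : ∀ ω, X ω = 1 ∨ X ω = -1) (hhalf : μ {ω | X ω = 1} = μ {ω | X ω = -1}) :
    IdentDistrib X (fun ω => -X ω) μ μ where
  aemeasurable_fst := hX.aemeasurable
  aemeasurable_snd := hX.neg.aemeasurable
  map_eq := by
    have hpre (B : Set ℝ) :
        X ⁻¹' B = {ω | X ω = 1 ∧ (1 : ℝ) ∈ B} ∪ {ω | X ω = -1 ∧ (-1 : ℝ) ∈ B} := by
      ext ω
      rcases hsign ω with h | h <;> norm_num [h]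
    ext A hA
    have hneg : (fun ω => -X ω) ⁻¹' A = X ⁻¹' (-A) := rfl
    rw [Measure.map_apply hX hA, Measure.map_apply (f := fun ω => -X ω) hX.neg hA, hneg, hpre,
      hpre]
    by_cases h1 : (1 : ℝ) ∈ A <;> by_cases h2 : (-1 : ℝ) ∈ A <;>
      simp [h1, h2, hhalf, Set.union_comm]

theorem measure_lt_le_half_of_identDistrib_neg [IsProbabilityMeasure μ] {X : Ω → ℝ}
    (hX : IdentDistrib X (fun ω => -X ω) μ μ) {t : ℝ} (ht : 0 ≤ t) :
    μ {ω | t < X ω} ≤ 1 / 2 := by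
  have hsymm : μ {ω | t < X ω} = μ {ω | t < -X ω} := hX.measure_mem_eq measurableSet_Ioi
  have hdisj : Disjoint {ω | t < X ω} {ω | t < -X ω} :=
    Set.disjoint_left.2 fun ω (h1 : t < X ω) (h2 : t < -X ω) => by linarith
  have hsum : μ {ω | t < X ω} + μ {ω | t < -X ω} ≤ 1 := by
    have hmeas : NullMeasurableSet {ω | t < -X ω} μ :=
      hX.aemeasurable_snd.nullMeasurable measurableSet_Ioi
    rw [← measure_union₀ hmeas hdisj.aedisjoint]
    exact prob_le_one
  rw [← hsymm, ← mul_two] at hsum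
  rwa [ENNReal.le_div_iff_mul_le (by norm_num) (by norm_num)]

theorem measure_lt_sum_mul_le_half {ι : Type*} [Fintype ι] [IsProbabilityMeasure μ]
    {X : ι → Ω → ℝ} (hsymm : ∀ i, IdentDistrib (X i) (fun ω => -X i ω) μ μ)
    (hindep : iIndepFun X μ) (c : ι → ℝ) {t : ℝ} (ht : 0 ≤ t) :
    μ {ω | t < ∑ i, c i * X i ω} ≤ 1 / 2 := by
  have hneg : iIndepFun (fun i ω => -X i ω) μ :=
    hindep.comp (fun _ => Neg.neg) (fun _ => measurable_neg)
  have hsum := (IdentDistrib.pi hsymm hindep hneg).comp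
    (u := fun v : ι → ℝ => ∑ i, c i * v i) (by fun_prop)
  refine measure_lt_le_half_of_identDistrib_neg ?_ ht
  simpa [Function.comp_def] using hsum

end SymmetricSigns

theorem stmt16_general (n : ℕ) (i0 : Fin n)
    (u1 : Vec n)
    (Dstar : Matrix (Fin n) (Fin n) ℝ)
    (hDstar : Dstar = (-((n : ℝ) / 2)) • Matrix.of (fun i j => u1 i * u1 j) -
      (1 / 2 : ℝ) • (1 : Matrix (Fin n) (Fin n) ℝ))
    (u : Fin n → Vec n) (hu : Orthonormal ℝ u) (hu0 : u i0 = u1)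
    (f : ℝ)
    (Ω : Type) [MeasurableSpace Ω] (μ : Measure Ω) [IsProbabilityMeasure μ]
    (s : Fin n → Ω → ℝ)
    (hmeas : ∀ ℓ, Measurable (s ℓ))
    (hsign : ∀ ℓ, ℓ ≠ i0 → ∀ ω, s ℓ ω = 1 ∨ s ℓ ω = -1)
    (huni : ∀ ℓ, ℓ ≠ i0 →
      μ {ω | s ℓ ω = 1} = 1 / 2 ∧ μ {ω | s ℓ ω = -1} = 1 / 2)
    (hindep : ProbabilityTheory.iIndepFun
      (fun ℓ : {ℓ : Fin n // ℓ ≠ i0} => s ℓ) μ) :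
    ∀ σ : Vec n,
      μ {ω | ‖σ‖ / ((n : ℝ) + 3) <
        CDot Dstar
          ((1 / 2 : ℝ) •
            (u1 + f • ∑ ℓ ∈ Finset.univ.filter (fun ℓ => ℓ ≠ i0), s ℓ ω • u ℓ))
          σ} ≤ 1 / 2 := by
  intro σ
  obtain rfl : Dstar = (-((n : ℝ) / 2)) • vecMulVec u1.ofLp u1.ofLp - (1 / 2 : ℝ) • 1 := hDstar
  have hu1 : ‖u1‖ = 1 := hu0 ▸ hu.1 i0
  set w : Ω → Vec n := fun ω => f • ∑ ℓ ∈ Finset.univ.filter (fun ℓ => ℓ ≠ i0), s ℓ ω • u ℓ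
  have horth (ω : Ω) : inner ℝ u1 (w ω) = 0 := by
    rw [inner_smul_right, inner_sum, Finset.sum_eq_zero, mul_zero]
    intro ℓ hℓ
    rw [inner_smul_right, ← hu0, hu.2 (Finset.mem_filter.1 hℓ).2.symm, mul_zero]
  have hw (ω : Ω) :
      inner ℝ (w ω) σ / 3 = ∑ ℓ : {ℓ // ℓ ≠ i0}, f / 3 * inner ℝ (u ℓ) σ * s ℓ ω := by
    rw [real_inner_smul_left, sum_inner, Finset.sum_subtype (p := fun ℓ => ℓ ≠ i0) _
      (fun ℓ => by simp), Finset.mul_sum, Finset.sum_div]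
    refine Finset.sum_congr rfl fun ℓ _ => ?_
    rw [real_inner_smul_left]
    ring
  have ht : 0 ≤ (‖σ‖ - inner ℝ u1 σ) / (n + 3) := by
    have := real_inner_le_norm u1 σ
    rw [hu1, one_mul] at this
    exact div_nonneg (by linarith) (by positivity)
  have hsymm (ℓ : {ℓ // ℓ ≠ i0}) : IdentDistrib (s ℓ) (fun ω => -s ℓ ω) μ μ :=
    identDistrib_neg_of_eq_one_or_eq_neg_one (hmeas ℓ) (hsign ℓ ℓ.2)
      ((huni ℓ ℓ.2).1.trans (huni ℓ ℓ.2).2.symm)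
  refine (measure_mono fun ω hω => ?_).trans
    (measure_lt_sum_mul_le_half hsymm hindep (fun ℓ => f / 3 * inner ℝ (u ℓ) σ) ht)
  rw [Set.mem_ofPred_eq, CDot_half_smul_add_of_inner_eq_zero hu1 (horth ω), hw] at hω
  rw [Set.mem_ofPred_eq, sub_div]
  linarith

/-- with q0 built from i.i.d. uniform signs on the orthogonal complement
of u1, no fixed intervention makes the consumer surplus derivative exceed
norm(sigma)/(n+3) with probability greater than 1/2. -/
theorem stmt16 (n : ℕ) (hn : 2 ≤ n) (i0 : Fin n) (hi0 : (i0 : ℕ) = 0)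
    (u1 : Vec n) (hu1 : u1 = (Real.sqrt n)⁻¹ • onesV n)
    (Dstar : Matrix (Fin n) (Fin n) ℝ)
    (hDstar : Dstar = (-((n : ℝ) / 2)) • Matrix.of (fun i j => u1 i * u1 j) -
      (1 / 2 : ℝ) • (1 : Matrix (Fin n) (Fin n) ℝ))
    (u : Fin n → Vec n) (hu : Orthonormal ℝ u) (hu0 : u i0 = u1)
    (f : ℝ) (hf0 : 0 < f) (hf1 : f ≤ (Real.sqrt ((n : ℝ) - 1))⁻¹)
    (Ω : Type) [MeasurableSpace Ω] (μ : Measure Ω) [IsProbabilityMeasure μ]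
    (s : Fin n → Ω → ℝ)
    (hmeas : ∀ ℓ, Measurable (s ℓ))
    (hsign : ∀ ℓ, ℓ ≠ i0 → ∀ ω, s ℓ ω = 1 ∨ s ℓ ω = -1)
    (huni : ∀ ℓ, ℓ ≠ i0 →
      μ {ω | s ℓ ω = 1} = 1 / 2 ∧ μ {ω | s ℓ ω = -1} = 1 / 2)
    (hindep : ProbabilityTheory.iIndepFun
      (fun ℓ : {ℓ : Fin n // ℓ ≠ i0} => s ℓ) μ) :
    ∀ σ : Vec n,
      μ {ω | ‖σ‖ / ((n : ℝ) + 3) <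
        CDot Dstar
          ((1 / 2 : ℝ) •
            (u1 + f • ∑ ℓ ∈ Finset.univ.filter (fun ℓ => ℓ ≠ i0), s ℓ ω • u ℓ))
          σ} ≤ 1 / 2 :=
  stmt16_general n i0 u1 Dstar hDstar u hu hu0 f Ω μ s hmeas hsign huni hindep
end
end
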